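/- Let r > 0 and t = t₁ = t₂ = t₃ be a nonzero real number. Then for every unit vector ℓ ∈ ℝ³ one has λ_M(ℓ) = r²ℓ₃² + (1/2)[r² + t² + √((r² − t²)² + 4r²t²ℓ₃²)], this expression is monotone nondecreasing in ℓ₃² ∈ [0,1], and the maximum of λ_M over the unit sphere equals 2r² + t², attained at ℓ = (0,0,±1). -/
import Mathlib


open Matrix

/-- The function `λ_M(ℓ) = r²ℓ₃² + (1/2)[r² + ℓ′² + √((r² − ℓ′²)² + 4r²t₃²ℓ₃²)]`,
where `ℓ′² = t₁²ℓ₁² + t₂²ℓ₂² + t₃²ℓ₃²`, arising in the two-sided optimization for a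
two-qubit X state with Bloch vectors `(0,0,±r)` and correlation matrix
`diag(t₁,t₂,t₃)`. -/
noncomputable def lamM (r t₁ t₂ t₃ : ℝ) (ℓ : Fin 3 → ℝ) : ℝ :=
  r ^ 2 * ℓ 2 ^ 2 + (1 / 2) *
    (r ^ 2 + (t₁ ^ 2 * ℓ 0 ^ 2 + t₂ ^ 2 * ℓ 1 ^ 2 + t₃ ^ 2 * ℓ 2 ^ 2) +
      Real.sqrt ((r ^ 2 - (t₁ ^ 2 * ℓ 0 ^ 2 + t₂ ^ 2 * ℓ 1 ^ 2 + t₃ ^ 2 * ℓ 2 ^ 2)) ^ 2 +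
        4 * r ^ 2 * t₃ ^ 2 * ℓ 2 ^ 2))

/-- If `t₁ = t₂ = t₃ = t ≠ 0`, then for every unit vector `ℓ`,
`λ_M(ℓ) = r²ℓ₃² + (1/2)[r² + t² + √((r² − t²)² + 4r²t²ℓ₃²)]`, this expression is
monotone nondecreasing in `ℓ₃² ∈ [0,1]`, and the maximum of `λ_M` over the unit
sphere equals `2r² + t²`, attained at `ℓ = (0,0,±1)`. -/
theorem stmt_18 (r t : ℝ) (hr : 0 < r) (ht : t ≠ 0) :
    (∀ ℓ : Fin 3 → ℝ, ℓ ⬝ᵥ ℓ = 1 →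
      lamM r t t t ℓ = r ^ 2 * ℓ 2 ^ 2 + (1 / 2) *
        (r ^ 2 + t ^ 2 + Real.sqrt ((r ^ 2 - t ^ 2) ^ 2 + 4 * r ^ 2 * t ^ 2 * ℓ 2 ^ 2))) ∧
    (∀ s s' : ℝ, 0 ≤ s → s ≤ s' → s' ≤ 1 →
      r ^ 2 * s + (1 / 2) *
          (r ^ 2 + t ^ 2 + Real.sqrt ((r ^ 2 - t ^ 2) ^ 2 + 4 * r ^ 2 * t ^ 2 * s)) ≤
        r ^ 2 * s' + (1 / 2) *
          (r ^ 2 + t ^ 2 + Real.sqrt ((r ^ 2 - t ^ 2) ^ 2 + 4 * r ^ 2 * t ^ 2 * s'))) ∧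
    IsGreatest {s : ℝ | ∃ ℓ : Fin 3 → ℝ, ℓ ⬝ᵥ ℓ = 1 ∧ s = lamM r t t t ℓ}
      (2 * r ^ 2 + t ^ 2) ∧
    lamM r t t t ![0, 0, 1] = 2 * r ^ 2 + t ^ 2 ∧
    lamM r t t t ![0, 0, -1] = 2 * r ^ 2 + t ^ 2 := by
  have hsq : Real.sqrt ((r ^ 2 - t ^ 2) ^ 2 + 4 * r ^ 2 * t ^ 2 * 1) = r ^ 2 + t ^ 2 := by
    have : (r ^ 2 - t ^ 2) ^ 2 + 4 * r ^ 2 * t ^ 2 * 1 = (r ^ 2 + t ^ 2) ^ 2 := by ring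
    rw [this, Real.sqrt_sq (by positivity)]
  have key : ∀ ℓ : Fin 3 → ℝ, ℓ ⬝ᵥ ℓ = 1 →
      lamM r t t t ℓ = r ^ 2 * ℓ 2 ^ 2 + (1 / 2) *
        (r ^ 2 + t ^ 2 + Real.sqrt ((r ^ 2 - t ^ 2) ^ 2 + 4 * r ^ 2 * t ^ 2 * ℓ 2 ^ 2)) := by
    intro ℓ hℓ
    rw [dotProduct, Fin.sum_univ_three] at hℓ
    have h : t ^ 2 * ℓ 0 ^ 2 + t ^ 2 * ℓ 1 ^ 2 + t ^ 2 * ℓ 2 ^ 2 = t ^ 2 := by nlinarith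
    simp only [lamM, h]
  have mono : ∀ s s' : ℝ, 0 ≤ s → s ≤ s' → s' ≤ 1 →
      r ^ 2 * s + (1 / 2) *
          (r ^ 2 + t ^ 2 + Real.sqrt ((r ^ 2 - t ^ 2) ^ 2 + 4 * r ^ 2 * t ^ 2 * s)) ≤
        r ^ 2 * s' + (1 / 2) *
          (r ^ 2 + t ^ 2 + Real.sqrt ((r ^ 2 - t ^ 2) ^ 2 + 4 * r ^ 2 * t ^ 2 * s')) := by
    intro s s' hs hss' _
    have h1 : Real.sqrt ((r ^ 2 - t ^ 2) ^ 2 + 4 * r ^ 2 * t ^ 2 * s) ≤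
        Real.sqrt ((r ^ 2 - t ^ 2) ^ 2 + 4 * r ^ 2 * t ^ 2 * s') := by
      apply Real.sqrt_le_sqrt; nlinarith [mul_le_mul_of_nonneg_left hss' (by positivity : (0:ℝ) ≤ 4 * r ^ 2 * t ^ 2)]
    nlinarith [sq_nonneg r]
  have h1 : lamM r t t t ![0, 0, 1] = 2 * r ^ 2 + t ^ 2 := by
    simp only [lamM, Matrix.cons_val_zero, Matrix.cons_val_one, Matrix.head_cons,
      Matrix.cons_val_two, Matrix.tail_cons]
    have : t ^ 2 * (0:ℝ) ^ 2 + t ^ 2 * (0:ℝ) ^ 2 + t ^ 2 * (1:ℝ) ^ 2 = t ^ 2 := by ring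
    rw [this]
    have h2 : 4 * r ^ 2 * t ^ 2 * (1:ℝ) ^ 2 = 4 * r ^ 2 * t ^ 2 * 1 := by ring
    rw [h2, hsq]; ring
  have h2 : lamM r t t t ![0, 0, -1] = 2 * r ^ 2 + t ^ 2 := by
    simp only [lamM, Matrix.cons_val_zero, Matrix.cons_val_one, Matrix.head_cons,
      Matrix.cons_val_two, Matrix.tail_cons]
    have : t ^ 2 * (0:ℝ) ^ 2 + t ^ 2 * (0:ℝ) ^ 2 + t ^ 2 * (-1:ℝ) ^ 2 = t ^ 2 := by ring
    rw [this]
    have h3 : 4 * r ^ 2 * t ^ 2 * (-1:ℝ) ^ 2 = 4 * r ^ 2 * t ^ 2 * 1 := by ring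
    rw [h3, hsq]; ring
  refine ⟨key, mono, ⟨⟨![0, 0, 1], ?_, h1.symm⟩, ?_⟩, h1, h2⟩
  · rw [dotProduct, Fin.sum_univ_three]; simp
  · rintro s ⟨ℓ, hℓ, rfl⟩
    rw [key ℓ hℓ]
    have hℓ' := hℓ
    rw [dotProduct, Fin.sum_univ_three] at hℓ'
    have hle : ℓ 2 ^ 2 ≤ 1 := by nlinarith [sq_nonneg (ℓ 0), sq_nonneg (ℓ 1)]
    have := mono (ℓ 2 ^ 2) 1 (sq_nonneg _) hle le_rfl
    rw [hsq] at this
    linarith
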